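/- arXiv:2004.04357 — 4 statements merged into one kernel-verified Lean document; each statement's English description precedes it below -/
import Mathlib

section
/- (Gradient-mapping comparison, nonsmooth case.) Let $f$ be convex and $\ell_f$-Lipschitz, $h$ convex lower-semicontinuous, $g$ smooth with $L_g$-Lipschitz Jacobian, and $M>\ell_f L_g$. Fix $x\in\operatorname{dom} h$, vectors $\tilde g\in\mathbb{R}^m$ and $\tilde J\in\mathbb{R}^{m\times n}$. Define $\hat x_+ = \operatorname{argmin}_y\{f(g(x)+g'(x)(y-x))+h(y)+\frac{M}{2}\|y-x\|^2\}$ and $x_+ = \operatorname{argmin}_y\{f(\tilde g+\tilde J(y-x))+h(y)+\frac{M}{2}\|y-x\|^2\}$, and let $\mathcal{G}(x)=M(x-\hat x_+)$, $\widetilde{\mathcal{G}}(x)=M(x-x_+)$. Then $\frac{M-\ell_f L_g}{M^2}\|\mathcal{G}(x)\|^2 \le \frac{2M+\ell_f L_g}{M^2}\|\widetilde{\mathcal{G}}(x)\|^2 + 4\ell_f\|\tilde g - g(x)\| + \frac{2\ell_f}{L_g}\|\tilde J - g'(x)\|^2$. -/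
/-!
Both prox-linear subproblems are `M`-strongly convex with the same `h` and the same quadratic
term, so adding the growth inequality of each problem at the other's minimizer bounds
`M ‖x̂₊ - x₊‖²` by the gap between the two linear models of `f ∘ g`, evaluated at `x̂₊` and `x₊`.
As `f` is `ℓ_f`-Lipschitz, that gap at `y` is at most `ℓ_f (‖g̃ - g(x)‖ + ‖J̃ - g'(x)‖ ‖y - x‖)`.
Young's inequality with weight `L_g` and `‖x̂₊ - x‖ ≤ ‖x̂₊ - x₊‖ + ‖x₊ - x‖` finish the proof.
-/

open Set Filter Topology

section StrongConvexity

variable {E : Type*} [NormedAddCommGroup E] [InnerProductSpace ℝ E]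

theorem ConvexOn.strongConvexOn_add_sq_norm_sub {s : Set E} {φ : E → ℝ} (hφ : ConvexOn ℝ s φ)
    (m : ℝ) (x : E) : StrongConvexOn s m fun y ↦ φ y + m / 2 * ‖y - x‖ ^ 2 := by
  rw [strongConvexOn_iff_convex]
  have hlin : ConvexOn ℝ s ((-m) • innerₛₗ ℝ x) := LinearMap.convexOn _ hφ.1
  refine (hφ.add (hlin.add_const (m / 2 * ‖x‖ ^ 2))).congr fun y _ ↦ ?_
  simp only [Pi.add_apply, LinearMap.smul_apply, innerₛₗ_apply_apply, smul_eq_mul,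
    norm_sub_sq_real, real_inner_comm x y]
  ring

theorem StrongConvexOn.add_sq_norm_sub_le_of_isMinOn {s : Set E} {m : ℝ} {f : E → ℝ} {a b : E}
    (hf : StrongConvexOn s m f) (hmin : IsMinOn f s a) (ha : a ∈ s) (hb : b ∈ s) :
    f a + m / 2 * ‖b - a‖ ^ 2 ≤ f b := by
  have hseg : ∀ t ∈ Ioo (0 : ℝ) 1, f a + (1 - t) * (m / 2 * ‖b - a‖ ^ 2) ≤ f b := by
    rintro t ⟨ht0, ht1⟩
    have hconv := hf.2 ha hb (sub_nonneg.2 ht1.le) ht0.le (sub_add_cancel 1 t)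
    have hle := hmin (hf.1 ha hb (sub_nonneg.2 ht1.le) ht0.le (sub_add_cancel 1 t))
    rw [norm_sub_rev] at hconv
    simp only [smul_eq_mul, mem_ofPred_eq] at hconv hle
    nlinarith
  have hcont : Continuous fun t : ℝ ↦ f a + (1 - t) * (m / 2 * ‖b - a‖ ^ 2) := by fun_prop
  have hlim := (hcont.tendsto 0).mono_left (nhdsWithin_le_nhds (s := Ioi 0))
  rw [sub_zero, one_mul] at hlim
  exact le_of_tendsto hlim (eventually_of_mem (Ioo_mem_nhdsGT one_pos) hseg)

theorem StrongConvexOn.mul_sq_norm_sub_le_of_isMinOn {s : Set E} {m : ℝ} {f₁ f₂ : E → ℝ}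
    {a₁ a₂ : E} (hf₁ : StrongConvexOn s m f₁) (hf₂ : StrongConvexOn s m f₂)
    (hmin₁ : IsMinOn f₁ s a₁) (hmin₂ : IsMinOn f₂ s a₂) (ha₁ : a₁ ∈ s) (ha₂ : a₂ ∈ s) :
    m * ‖a₁ - a₂‖ ^ 2 ≤ (f₁ a₂ - f₂ a₂) - (f₁ a₁ - f₂ a₁) := by
  have h₁ := hf₁.add_sq_norm_sub_le_of_isMinOn hmin₁ ha₁ ha₂
  have h₂ := hf₂.add_sq_norm_sub_le_of_isMinOn hmin₂ ha₂ ha₁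
  rw [norm_sub_rev] at h₁
  linarith

end StrongConvexity

section ExtendedValued

variable {V : Type*} {h : V → EReal}

theorem convexOn_toReal_of_ereal_convex [AddCommGroup V] [Module ℝ V]
    (hconv : ∀ a b : V, ∀ t : ℝ, 0 ≤ t → t ≤ 1 →
      h (t • a + (1 - t) • b) ≤ ((t : ℝ) : EReal) * h a + (((1 - t : ℝ)) : EReal) * h b)
    (hproper : ∀ y, h y ≠ ⊥) :
    ConvexOn ℝ {y | h y ≠ ⊤} fun y ↦ (h y).toReal := by
  have hle : ∀ a ∈ {y | h y ≠ ⊤}, ∀ b ∈ {y | h y ≠ ⊤}, ∀ t : ℝ, 0 ≤ t → t ≤ 1 →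
      h (t • a + (1 - t) • b) ≤ ((t * (h a).toReal + (1 - t) * (h b).toReal : ℝ) : EReal) := by
    intro a ha b hb t ht0 ht1
    rw [EReal.coe_add, EReal.coe_mul, EReal.coe_mul, EReal.coe_toReal ha (hproper a),
      EReal.coe_toReal hb (hproper b)]
    exact hconv a b t ht0 ht1
  refine ⟨fun a ha b hb s t hs ht hst ↦ ?_, fun a ha b hb s t hs ht hst ↦ ?_⟩
  all_goals obtain rfl : t = 1 - s := by linarith
  · exact ne_top_of_le_ne_top (EReal.coe_ne_top _) (hle a ha b hb s hs (by linarith))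
  · simpa only [smul_eq_mul, EReal.toReal_coe] using
      EReal.toReal_le_toReal (hle a ha b hb s hs (by linarith)) (hproper _) (EReal.coe_ne_top _)

theorem isMinOn_add_toReal_of_ereal {F : V → ℝ} {a x : V} (hproper : ∀ y, h y ≠ ⊥)
    (hx : h x ≠ ⊤) (hmin : ∀ y, ((F a : ℝ) : EReal) + h a ≤ ((F y : ℝ) : EReal) + h y) :
    a ∈ {y | h y ≠ ⊤} ∧ IsMinOn (fun y ↦ F y + (h y).toReal) {y | h y ≠ ⊤} a := by
  have ha : h a ≠ ⊤ := by
    intro hatop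
    have := hmin x
    rw [hatop, EReal.coe_add_top, ← EReal.coe_toReal hx (hproper x), ← EReal.coe_add,
      top_le_iff] at this
    exact EReal.coe_ne_top _ this
  refine ⟨ha, fun y hy ↦ ?_⟩
  have := hmin y
  rwa [← EReal.coe_toReal ha (hproper a), ← EReal.coe_toReal hy (hproper y), ← EReal.coe_add,
    ← EReal.coe_add, EReal.coe_le_coe_iff] at this

end ExtendedValued

section ProxLinear

variable {E F : Type*} [NormedAddCommGroup E] [InnerProductSpace ℝ E]
  [NormedAddCommGroup F] [NormedSpace ℝ F]

theorem prox_mul_sq_norm_sub_le {h : E → EReal} {φ₁ φ₂ : E → ℝ} {M : ℝ} {x a₁ a₂ : E}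
    (hconv : ∀ a b : E, ∀ t : ℝ, 0 ≤ t → t ≤ 1 →
      h (t • a + (1 - t) • b) ≤ ((t : ℝ) : EReal) * h a + (((1 - t : ℝ)) : EReal) * h b)
    (hproper : ∀ y, h y ≠ ⊥) (hx : h x ≠ ⊤)
    (hφ₁ : ConvexOn ℝ univ φ₁) (hφ₂ : ConvexOn ℝ univ φ₂)
    (hmin₁ : ∀ y, ((φ₁ a₁ + M / 2 * ‖a₁ - x‖ ^ 2 : ℝ) : EReal) + h a₁ ≤
      ((φ₁ y + M / 2 * ‖y - x‖ ^ 2 : ℝ) : EReal) + h y)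
    (hmin₂ : ∀ y, ((φ₂ a₂ + M / 2 * ‖a₂ - x‖ ^ 2 : ℝ) : EReal) + h a₂ ≤
      ((φ₂ y + M / 2 * ‖y - x‖ ^ 2 : ℝ) : EReal) + h y) :
    M * ‖a₁ - a₂‖ ^ 2 ≤ (φ₁ a₂ - φ₂ a₂) - (φ₁ a₁ - φ₂ a₁) := by
  have hh := convexOn_toReal_of_ereal_convex hconv hproper
  have hstrong : ∀ φ : E → ℝ, ConvexOn ℝ univ φ → StrongConvexOn {y | h y ≠ ⊤} M
      fun y ↦ φ y + M / 2 * ‖y - x‖ ^ 2 + (h y).toReal := by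
    intro φ hφ
    have := ((hφ.subset (subset_univ _) hh.1).add hh).strongConvexOn_add_sq_norm_sub M x
    simpa only [Pi.add_apply, add_right_comm] using this
  obtain ⟨ha₁, hmin₁'⟩ :=
    isMinOn_add_toReal_of_ereal (F := fun y ↦ φ₁ y + M / 2 * ‖y - x‖ ^ 2) hproper hx hmin₁
  obtain ⟨ha₂, hmin₂'⟩ :=
    isMinOn_add_toReal_of_ereal (F := fun y ↦ φ₂ y + M / 2 * ‖y - x‖ ^ 2) hproper hx hmin₂
  have := (hstrong φ₁ hφ₁).mul_sq_norm_sub_le_of_isMinOn (hstrong φ₂ hφ₂) hmin₁' hmin₂' ha₁ ha₂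
  linarith

theorem ConvexOn.comp_const_add_apply_sub {f : F → ℝ} (hf : ConvexOn ℝ univ f) (c : F)
    (A : E →L[ℝ] F) (x : E) : ConvexOn ℝ univ fun y ↦ f (c + A (y - x)) := by
  refine (hf.comp_affineMap (A.toLinearMap.toAffineMap + AffineMap.const ℝ E (c - A x))).congr
    fun y _ ↦ ?_
  simp only [AffineMap.coe_add, LinearMap.coe_toAffineMap, ContinuousLinearMap.coe_coe,
    AffineMap.coe_const, Function.comp_apply, Pi.add_apply, Function.const_apply, map_sub]
  congr 1
  abel

theorem abs_sub_le_of_abs_sub_le_mul_norm {f : F → ℝ} {ℓ : ℝ} (hℓ : 0 ≤ ℓ)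
    (hf : ∀ u v, |f u - f v| ≤ ℓ * ‖u - v‖) (c c' : F) (A B : E →L[ℝ] F) (v : E) :
    |f (c + A v) - f (c' + B v)| ≤ ℓ * (‖c - c'‖ + ‖A - B‖ * ‖v‖) := by
  have hsub : c + A v - (c' + B v) = (c - c') + (A - B) v := by
    rw [sub_apply]; abel
  calc |f (c + A v) - f (c' + B v)| ≤ ℓ * ‖c + A v - (c' + B v)‖ := hf _ _
    _ ≤ ℓ * (‖c - c'‖ + ‖A - B‖ * ‖v‖) := by
      rw [hsub]
      gcongr
      exact (norm_add_le _ _).trans (by gcongr; exact (A - B).le_opNorm v)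

end ProxLinear

theorem mul_sq_le_of_mul_sq_le_of_le_add {ℓ L M δ ε a b d : ℝ} (hℓ : 0 ≤ ℓ) (hL : 0 < L)
    (hM : 0 ≤ M) (ha : 0 ≤ a) (hd : M * d ^ 2 ≤ 2 * ℓ * δ + ℓ * ε * (a + b))
    (htri : a ≤ d + b) :
    (M - ℓ * L) * a ^ 2 ≤ (2 * M + ℓ * L) * b ^ 2 + 4 * ℓ * δ + 2 * ℓ / L * ε ^ 2 := by
  obtain ⟨q, hq, rfl⟩ : ∃ q, 0 ≤ q ∧ ℓ = q * L := ⟨ℓ / L, by positivity, by field_simp⟩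
  have hqL : 2 * (q * L) / L = 2 * q := by field_simp
  have ha2 : a ^ 2 ≤ 2 * d ^ 2 + 2 * b ^ 2 := by nlinarith [sq_nonneg (d - b)]
  rw [hqL]
  -- Young: `2 q L ε a ≤ q L² a² + q ε²`, and likewise for `b`
  nlinarith [mul_le_mul_of_nonneg_left ha2 hM, mul_nonneg hq (sq_nonneg (L * a - ε)),
    mul_nonneg hq (sq_nonneg (L * b - ε))]

theorem stmt5_general {n m : ℕ}
    (f : EuclideanSpace ℝ (Fin m) → ℝ) (ℓf Lg M : ℝ)
    (hℓf : 0 ≤ ℓf) (hLg : 0 < Lg) (hM : ℓf * Lg < M)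
    (hfconv : ConvexOn ℝ Set.univ f)
    (hf : ∀ u v, |f u - f v| ≤ ℓf * ‖u - v‖)
    (g : EuclideanSpace ℝ (Fin n) → EuclideanSpace ℝ (Fin m))
    (g' : EuclideanSpace ℝ (Fin n) →
      (EuclideanSpace ℝ (Fin n) →L[ℝ] EuclideanSpace ℝ (Fin m)))
    (h : EuclideanSpace ℝ (Fin n) → EReal)
    (hconv : ∀ a b : EuclideanSpace ℝ (Fin n), ∀ t : ℝ, 0 ≤ t → t ≤ 1 →
      h (t • a + (1 - t) • b) ≤ ((t : ℝ) : EReal) * h a + (((1 - t : ℝ)) : EReal) * h b)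
    (hproper : ∀ y, h y ≠ ⊥)
    (x : EuclideanSpace ℝ (Fin n)) (hx : h x ≠ ⊤)
    (tg : EuclideanSpace ℝ (Fin m))
    (tJ : EuclideanSpace ℝ (Fin n) →L[ℝ] EuclideanSpace ℝ (Fin m))
    (xhat xplus : EuclideanSpace ℝ (Fin n))
    (hmin1 : ∀ y,
      ((f (g x + g' x (xhat - x)) + M / 2 * ‖xhat - x‖ ^ 2 : ℝ) : EReal) + h xhat ≤
      ((f (g x + g' x (y - x)) + M / 2 * ‖y - x‖ ^ 2 : ℝ) : EReal) + h y)
    (hmin2 : ∀ y,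
      ((f (tg + tJ (xplus - x)) + M / 2 * ‖xplus - x‖ ^ 2 : ℝ) : EReal) + h xplus ≤
      ((f (tg + tJ (y - x)) + M / 2 * ‖y - x‖ ^ 2 : ℝ) : EReal) + h y) :
    (M - ℓf * Lg) / M ^ 2 * ‖M • (x - xhat)‖ ^ 2 ≤
      (2 * M + ℓf * Lg) / M ^ 2 * ‖M • (x - xplus)‖ ^ 2
      + 4 * ℓf * ‖tg - g x‖ + 2 * ℓf / Lg * ‖tJ - g' x‖ ^ 2 := by
  have hM0 : 0 < M := (mul_nonneg hℓf hLg.le).trans_lt hM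
  have hstab := prox_mul_sq_norm_sub_le hconv hproper hx
    (hfconv.comp_const_add_apply_sub (g x) (g' x) x) (hfconv.comp_const_add_apply_sub tg tJ x)
    hmin1 hmin2
  have hgap : ∀ y, |f (g x + g' x (y - x)) - f (tg + tJ (y - x))| ≤
      ℓf * (‖tg - g x‖ + ‖tJ - g' x‖ * ‖y - x‖) := fun y ↦ by
    simpa only [norm_sub_rev] using
      abs_sub_le_of_abs_sub_le_mul_norm hℓf hf (g x) tg (g' x) tJ (y - x)
  have hgap_plus := abs_le.1 (hgap xplus)
  have hgap_hat := abs_le.1 (hgap xhat)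
  have hscale : ∀ (c : ℝ) (w : EuclideanSpace ℝ (Fin n)),
      c / M ^ 2 * ‖M • w‖ ^ 2 = c * ‖w‖ ^ 2 := by
    intro c w
    rw [norm_smul, mul_pow, Real.norm_of_nonneg hM0.le]
    field_simp
  rw [hscale, hscale, norm_sub_rev x, norm_sub_rev x]
  refine mul_sq_le_of_mul_sq_le_of_le_add hℓf hLg hM0.le (norm_nonneg _) ?_
    (norm_sub_le_norm_sub_add_norm_sub _ xplus _)
  linarith

/-- Gradient-mapping comparison lemma (nonsmooth case).  `h` is a proper convex
lower-semicontinuous extended-real-valued function; `xhat` and `xplus` are the minimizers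
of the exact and approximate prox-linear subproblems at `x`, and
`𝒢(x) = M(x - xhat)`, `𝒢̃(x) = M(x - xplus)`. -/
theorem stmt5 {n m : ℕ}
    (f : EuclideanSpace ℝ (Fin m) → ℝ) (ℓf Lg M : ℝ)
    (hℓf : 0 ≤ ℓf) (hLg : 0 < Lg) (hM : ℓf * Lg < M)
    (hfconv : ConvexOn ℝ Set.univ f)
    (hf : ∀ u v, |f u - f v| ≤ ℓf * ‖u - v‖)
    (g : EuclideanSpace ℝ (Fin n) → EuclideanSpace ℝ (Fin m))
    (g' : EuclideanSpace ℝ (Fin n) →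
      (EuclideanSpace ℝ (Fin n) →L[ℝ] EuclideanSpace ℝ (Fin m)))
    (hg : ∀ u, HasFDerivAt g (g' u) u)
    (hg' : ∀ u v, ‖g' u - g' v‖ ≤ Lg * ‖u - v‖)
    (h : EuclideanSpace ℝ (Fin n) → EReal)
    (hconv : ∀ a b : EuclideanSpace ℝ (Fin n), ∀ t : ℝ, 0 ≤ t → t ≤ 1 →
      h (t • a + (1 - t) • b) ≤ ((t : ℝ) : EReal) * h a + (((1 - t : ℝ)) : EReal) * h b)
    (hlsc : LowerSemicontinuous h)
    (hproper : ∀ y, h y ≠ ⊥)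
    (x : EuclideanSpace ℝ (Fin n)) (hx : h x ≠ ⊤)
    (tg : EuclideanSpace ℝ (Fin m))
    (tJ : EuclideanSpace ℝ (Fin n) →L[ℝ] EuclideanSpace ℝ (Fin m))
    (xhat xplus : EuclideanSpace ℝ (Fin n))
    (hmin1 : ∀ y,
      ((f (g x + g' x (xhat - x)) + M / 2 * ‖xhat - x‖ ^ 2 : ℝ) : EReal) + h xhat ≤
      ((f (g x + g' x (y - x)) + M / 2 * ‖y - x‖ ^ 2 : ℝ) : EReal) + h y)
    (hmin2 : ∀ y,
      ((f (tg + tJ (xplus - x)) + M / 2 * ‖xplus - x‖ ^ 2 : ℝ) : EReal) + h xplus ≤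
      ((f (tg + tJ (y - x)) + M / 2 * ‖y - x‖ ^ 2 : ℝ) : EReal) + h y) :
    (M - ℓf * Lg) / M ^ 2 * ‖M • (x - xhat)‖ ^ 2 ≤
      (2 * M + ℓf * Lg) / M ^ 2 * ‖M • (x - xplus)‖ ^ 2
      + 4 * ℓf * ‖tg - g x‖ + 2 * ℓf / Lg * ‖tJ - g' x‖ ^ 2 :=
  stmt5_general f ℓf Lg M hℓf hLg hM hfconv hf g g' h hconv hproper x hx tg tJ xhat xplus hmin1
    hmin2
end

section
/- (Descent lemma for inexact prox-linear step, nonsmooth case.) Under the same assumptions as the gradient-mapping comparison lemma with $\Phi(x)=f(g(x))+h(x)$, the point $x_+ = \operatorname{argmin}_y\{f(\tilde g+\tilde J(y-x))+h(y)+\frac{M}{2}\|y-x\|^2\}$ satisfies $\Phi(x_+) \le \Phi(x) - \bigl(\frac{M}{2}-\ell_f L_g\bigr)\|x_+-x\|^2 + 2\ell_f\|\tilde g-g(x)\| + \frac{\ell_f}{2L_g}\|\tilde J-g'(x)\|^2$. -/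
/-!
The model `y ↦ f (tg + tJ (y - x)) + h y` differs from `Φ = f ∘ g + h` by at most `ℓf` times the
linearization error `‖g y - (tg + tJ (y - x))‖`, which is bounded by the Taylor remainder
`Lg/2 ‖y - x‖²` plus the two approximation errors.  Comparing `x₊` with `y = x` in the
subproblem and splitting `ℓf ‖tJ - g' x‖ ‖x₊ - x‖` by Young's inequality gives the descent estimate.
-/

open Set

section Linearization

variable {E F : Type*} [NormedAddCommGroup E] [NormedSpace ℝ E]
  [NormedAddCommGroup F] [NormedSpace ℝ F]
  {g : E → F} {g' : E → E →L[ℝ] F} {Lg : ℝ}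

theorem norm_sub_sub_fderiv_le_of_lipschitz_fderiv (hg : ∀ u, HasFDerivAt g (g' u) u)
    (hg' : ∀ u v, ‖g' u - g' v‖ ≤ Lg * ‖u - v‖) (x y : E) :
    ‖g y - g x - g' x (y - x)‖ ≤ Lg / 2 * ‖y - x‖ ^ 2 := by
  set d := y - x
  set φ : ℝ → F := fun t => g (x + t • d) - g x - t • g' x d
  have hφ : ∀ t : ℝ, HasDerivAt φ (g' (x + t • d) d - g' x d) t := by
    intro t
    have hline : HasDerivAt (fun t : ℝ => x + t • d) d t := by
      simpa using ((hasDerivAt_id t).smul_const d).const_add x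
    exact (((hg _).comp_hasDerivAt t hline).sub_const (g x)).sub
      (by simpa using (hasDerivAt_id t).smul_const (g' x d))
  have hB : ∀ t : ℝ, HasDerivAt (fun t : ℝ => Lg / 2 * ‖d‖ ^ 2 * t ^ 2) (Lg * ‖d‖ ^ 2 * t) t :=
    fun t => ((hasDerivAt_pow 2 t).const_mul _).congr_deriv (by ring)
  have hφ'_le : ∀ t ∈ Ico (0 : ℝ) 1, ‖g' (x + t • d) d - g' x d‖ ≤ Lg * ‖d‖ ^ 2 * t := by
    intro t ht
    calc ‖g' (x + t • d) d - g' x d‖ = ‖(g' (x + t • d) - g' x) d‖ := by simp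
      _ ≤ ‖g' (x + t • d) - g' x‖ * ‖d‖ := ContinuousLinearMap.le_opNorm _ _
      _ ≤ Lg * ‖x + t • d - x‖ * ‖d‖ := by gcongr; exact hg' _ _
      _ = Lg * ‖d‖ ^ 2 * t := by
          rw [add_sub_cancel_left, norm_smul, Real.norm_eq_abs, abs_of_nonneg ht.1]; ring
  have hφ1 := image_norm_le_of_norm_deriv_right_le_deriv_boundary
    (fun t _ => (hφ t).continuousAt.continuousWithinAt) (fun t _ => (hφ t).hasDerivWithinAt)
    (by simp [φ]) hB hφ'_le (right_mem_Icc.2 zero_le_one)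
  simpa [φ, d] using hφ1

theorem norm_sub_linearization_le (hg : ∀ u, HasFDerivAt g (g' u) u)
    (hg' : ∀ u v, ‖g' u - g' v‖ ≤ Lg * ‖u - v‖) (x y : E) (tg : F) (tJ : E →L[ℝ] F) :
    ‖g y - (tg + tJ (y - x))‖ ≤
      Lg / 2 * ‖y - x‖ ^ 2 + ‖tg - g x‖ + ‖tJ - g' x‖ * ‖y - x‖ := by
  have hJ : ‖g' x (y - x) - tJ (y - x)‖ ≤ ‖tJ - g' x‖ * ‖y - x‖ := by
    rw [← sub_apply, norm_sub_rev tJ]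
    exact ContinuousLinearMap.le_opNorm _ _
  calc ‖g y - (tg + tJ (y - x))‖
      = ‖(g y - g x - g' x (y - x)) + (g x - tg) + (g' x (y - x) - tJ (y - x))‖ := by
        congr 1; abel
    _ ≤ ‖g y - g x - g' x (y - x)‖ + ‖g x - tg‖ + ‖g' x (y - x) - tJ (y - x)‖ :=
        norm_add₃_le
    _ ≤ Lg / 2 * ‖y - x‖ ^ 2 + ‖tg - g x‖ + ‖tJ - g' x‖ * ‖y - x‖ := by
        rw [norm_sub_rev (g x)]
        gcongr
        exact norm_sub_sub_fderiv_le_of_lipschitz_fderiv hg hg' x y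

end Linearization

theorem mul_le_sq_div_add_mul_sq {L : ℝ} (hL : 0 < L) (a b : ℝ) :
    a * b ≤ a ^ 2 / (2 * L) + L / 2 * b ^ 2 := by
  rw [div_add' _ _ _ (by positivity), le_div_iff₀ (by positivity)]
  nlinarith [sq_nonneg (a - L * b)]

theorem EReal.coe_add_le_coe_add_add_coe_of_coe_add_le {A B F G c : ℝ} {u v : EReal}
    (huv : (A : EReal) + u ≤ (B : EReal) + v) (hreal : F - A + B ≤ G + c) :
    (F : EReal) + u ≤ (G : EReal) + v + (c : EReal) :=
  calc (F : EReal) + u = ((F - A : ℝ) : EReal) + ((A : EReal) + u) := by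
        rw [← add_assoc, ← EReal.coe_add, _root_.sub_add_cancel]
    _ ≤ ((F - A : ℝ) : EReal) + ((B : EReal) + v) := add_le_add_right huv _
    _ = ((F - A + B : ℝ) : EReal) + v := by rw [← add_assoc, ← EReal.coe_add]
    _ ≤ ((G + c : ℝ) : EReal) + v := add_le_add_left (EReal.coe_le_coe_iff.2 hreal) _
    _ = (G : EReal) + v + (c : EReal) := by rw [EReal.coe_add, add_right_comm]

theorem stmt6_general {n m : ℕ}
    (f : EuclideanSpace ℝ (Fin m) → ℝ) (ℓf Lg M : ℝ)
    (hℓf : 0 ≤ ℓf) (hLg : 0 < Lg)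
    (hf : ∀ u v, |f u - f v| ≤ ℓf * ‖u - v‖)
    (g : EuclideanSpace ℝ (Fin n) → EuclideanSpace ℝ (Fin m))
    (g' : EuclideanSpace ℝ (Fin n) →
      (EuclideanSpace ℝ (Fin n) →L[ℝ] EuclideanSpace ℝ (Fin m)))
    (hg : ∀ u, HasFDerivAt g (g' u) u)
    (hg' : ∀ u v, ‖g' u - g' v‖ ≤ Lg * ‖u - v‖)
    (h : EuclideanSpace ℝ (Fin n) → EReal)
    (x : EuclideanSpace ℝ (Fin n))
    (tg : EuclideanSpace ℝ (Fin m))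
    (tJ : EuclideanSpace ℝ (Fin n) →L[ℝ] EuclideanSpace ℝ (Fin m))
    (xplus : EuclideanSpace ℝ (Fin n))
    (hmin : ∀ y,
      ((f (tg + tJ (xplus - x)) + M / 2 * ‖xplus - x‖ ^ 2 : ℝ) : EReal) + h xplus ≤
      ((f (tg + tJ (y - x)) + M / 2 * ‖y - x‖ ^ 2 : ℝ) : EReal) + h y) :
    ((f (g xplus) : ℝ) : EReal) + h xplus ≤
      ((f (g x) : ℝ) : EReal) + h x +
      ((2 * ℓf * ‖tg - g x‖ + ℓf / (2 * Lg) * ‖tJ - g' x‖ ^ 2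
        - (M / 2 - ℓf * Lg) * ‖xplus - x‖ ^ 2 : ℝ) : EReal) := by
  have hxmin : ((f (tg + tJ (xplus - x)) + M / 2 * ‖xplus - x‖ ^ 2 : ℝ) : EReal) + h xplus ≤
      ((f tg : ℝ) : EReal) + h x := by
    simpa using hmin x
  refine EReal.coe_add_le_coe_add_add_coe_of_coe_add_le hxmin ?_
  have hmodel : f (g xplus) - f (tg + tJ (xplus - x)) ≤ ℓf * ‖g xplus - (tg + tJ (xplus - x))‖ :=
    (le_abs_self _).trans (hf _ _)
  have hg_approx : f tg - f (g x) ≤ ℓf * ‖tg - g x‖ := (le_abs_self _).trans (hf _ _)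
  have hlin := mul_le_mul_of_nonneg_left
    (norm_sub_linearization_le hg hg' x xplus tg tJ) hℓf
  have hyoung := mul_le_mul_of_nonneg_left
    (mul_le_sq_div_add_mul_sq hLg ‖tJ - g' x‖ ‖xplus - x‖) hℓf
  linear_combination hmodel + hg_approx + hlin + hyoung

/-- Descent lemma for the inexact prox-linear step (nonsmooth case).  With
`Φ = f ∘ g + h`, the minimizer `xplus` of the approximate prox-linear subproblem
satisfies `Φ(xplus) ≤ Φ(x) - (M/2 - ℓf Lg)‖xplus - x‖² + 2ℓf‖tg - g(x)‖
+ (ℓf/(2Lg))‖tJ - g'(x)‖²`. -/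
theorem stmt6 {n m : ℕ}
    (f : EuclideanSpace ℝ (Fin m) → ℝ) (ℓf Lg M : ℝ)
    (hℓf : 0 ≤ ℓf) (hLg : 0 < Lg) (hM : 0 < M)
    (hfconv : ConvexOn ℝ Set.univ f)
    (hf : ∀ u v, |f u - f v| ≤ ℓf * ‖u - v‖)
    (g : EuclideanSpace ℝ (Fin n) → EuclideanSpace ℝ (Fin m))
    (g' : EuclideanSpace ℝ (Fin n) →
      (EuclideanSpace ℝ (Fin n) →L[ℝ] EuclideanSpace ℝ (Fin m)))
    (hg : ∀ u, HasFDerivAt g (g' u) u)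
    (hg' : ∀ u v, ‖g' u - g' v‖ ≤ Lg * ‖u - v‖)
    (h : EuclideanSpace ℝ (Fin n) → EReal)
    (hconv : ∀ a b : EuclideanSpace ℝ (Fin n), ∀ t : ℝ, 0 ≤ t → t ≤ 1 →
      h (t • a + (1 - t) • b) ≤ ((t : ℝ) : EReal) * h a + (((1 - t : ℝ)) : EReal) * h b)
    (hlsc : LowerSemicontinuous h)
    (hproper : ∀ y, h y ≠ ⊥)
    (x : EuclideanSpace ℝ (Fin n)) (hx : h x ≠ ⊤)
    (tg : EuclideanSpace ℝ (Fin m))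
    (tJ : EuclideanSpace ℝ (Fin n) →L[ℝ] EuclideanSpace ℝ (Fin m))
    (xplus : EuclideanSpace ℝ (Fin n))
    (hmin : ∀ y,
      ((f (tg + tJ (xplus - x)) + M / 2 * ‖xplus - x‖ ^ 2 : ℝ) : EReal) + h xplus ≤
      ((f (tg + tJ (y - x)) + M / 2 * ‖y - x‖ ^ 2 : ℝ) : EReal) + h y) :
    ((f (g xplus) : ℝ) : EReal) + h xplus ≤
      ((f (g x) : ℝ) : EReal) + h x +
      ((2 * ℓf * ‖tg - g x‖ + ℓf / (2 * Lg) * ‖tJ - g' x‖ ^ 2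
        - (M / 2 - ℓf * Lg) * ‖xplus - x‖ ^ 2 : ℝ) : EReal) :=
  stmt6_general f ℓf Lg M hℓf hLg hf g g' hg hg' h x tg tJ xplus hmin
end

section
/- (Corrected SVRG estimator error.) With the notation of the previous lemma, let $\mathcal{B}$ be a batch of $B$ indices sampled independently and uniformly with replacement from $\{1,\dots,N\}$, and define $\tilde g = \frac{1}{B}\sum_{j\in\mathcal{B}}\bigl(g_j(x)-g_j(x_0)-g_j'(x_0)(x-x_0)\bigr) + g(x_0)+g'(x_0)(x-x_0)$. Then $\mathbb{E}\|\tilde g - g(x)\| \le \frac{L_g}{2\sqrt{B}}\|x-x_0\|^2$. -/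
/-!
Each summand `Y j = g j x - g j x₀ - g' j x₀ (x - x₀)` is a first-order Taylor remainder, so
`‖Y j‖ ≤ L j / 2 * ‖x - x₀‖ ^ 2` by comparing with the solution of `φ' = L j * ‖x - x₀‖ ^ 2 * t`
along the segment. The estimator error is the deviation of the batch mean of the `Y (β k)` from
the population mean of `Y`: for i.i.d. uniform samples the cross terms of its second moment
vanish, leaving (variance of `Y`) `/ B ≤ (mean of ‖Y‖²) / B`, and Jensen's inequality passes
from the second moment to the first.
-/

open Finset
open scoped RealInnerProductSpace

theorem norm_image_sub_sub_fderiv_apply_le {E F : Type*} [NormedAddCommGroup E] [NormedSpace ℝ E]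
    [NormedAddCommGroup F] [NormedSpace ℝ F] {f : E → F} {f' : E → E →L[ℝ] F} {C : ℝ}
    (hf : ∀ u, HasFDerivAt f (f' u) u) (hf' : ∀ u v, ‖f' u - f' v‖ ≤ C * ‖u - v‖) (x y : E) :
    ‖f y - f x - f' x (y - x)‖ ≤ C / 2 * ‖y - x‖ ^ 2 := by
  set v := y - x
  set G : ℝ → F := fun t => f (x + t • v) - f x - t • f' x v
  have hG : ∀ t : ℝ, HasDerivAt G (f' (x + t • v) v - f' x v) t := fun t =>
    have hline : HasDerivAt (fun t : ℝ => x + t • v) v t := by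
      simpa using ((hasDerivAt_id t).smul_const v).const_add x
    (((hf _).comp_hasDerivAt t hline).sub_const (f x)).sub
      (by simpa using (hasDerivAt_id t).smul_const (f' x v))
  have hbound : ∀ t : ℝ, HasDerivAt (fun t => C / 2 * ‖v‖ ^ 2 * t ^ 2) (C * ‖v‖ ^ 2 * t) t :=
    fun t => ((hasDerivAt_pow 2 t).const_mul (C / 2 * ‖v‖ ^ 2)).congr_deriv (by push_cast; ring)
  have hG' : ∀ t ∈ Set.Ico (0 : ℝ) 1, ‖f' (x + t • v) v - f' x v‖ ≤ C * ‖v‖ ^ 2 * t := by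
    rintro t ⟨ht, -⟩
    calc ‖f' (x + t • v) v - f' x v‖ = ‖(f' (x + t • v) - f' x) v‖ := rfl
      _ ≤ ‖f' (x + t • v) - f' x‖ * ‖v‖ := ContinuousLinearMap.le_opNorm _ _
      _ ≤ C * ‖x + t • v - x‖ * ‖v‖ := by gcongr; exact hf' _ _
      _ = C * ‖v‖ ^ 2 * t := by
        rw [add_sub_cancel_left, norm_smul, Real.norm_of_nonneg ht]; ring
  simpa [G, v] using image_norm_le_of_norm_deriv_right_le_deriv_boundary
    (fun t _ => (hG t).continuousAt.continuousWithinAt) (fun t _ => (hG t).hasDerivWithinAt)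
    (by simp [G]) hbound hG' (Set.right_mem_Icc.2 zero_le_one)

section SumOverFunctions

variable {ι α M : Type*} [Fintype ι] [DecidableEq ι] [Fintype α] [AddCommMonoid M]

theorem sum_fun_comp_eval (k : ι) (G : α → M) :
    ∑ β : ι → α, G (β k) = Fintype.card α ^ (Fintype.card ι - 1) • ∑ a, G a := by
  rw [← (Equiv.funSplitAt k α).symm.sum_comp, Fintype.sum_prod_type]
  simp [Fintype.card_subtype_compl, smul_sum]

theorem sum_fun_comp_eval_eval {k l : ι} (hlk : l ≠ k) (F : α → α → M) :
    ∑ β : ι → α, F (β k) (β l) =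
      Fintype.card α ^ (Fintype.card ι - 2) • ∑ a, ∑ b, F a b := by
  rw [← (Equiv.funSplitAt k α).symm.sum_comp, Fintype.sum_prod_type]
  simp [sum_fun_comp_eval (⟨l, hlk⟩ : { j // j ≠ k }), Fintype.card_subtype_compl,
    smul_sum, hlk, Nat.sub_sub]

end SumOverFunctions

section UniformBatch

variable {ι α E : Type*} [Fintype ι] [DecidableEq ι] [Fintype α]
  [NormedAddCommGroup E] [InnerProductSpace ℝ E]

theorem sum_fun_norm_sum_comp_sq_of_sum_eq_zero {Z : α → E} (hZ : ∑ a, Z a = 0) :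
    ∑ β : ι → α, ‖∑ k, Z (β k)‖ ^ 2 =
      Fintype.card ι * Fintype.card α ^ (Fintype.card ι - 1) * ∑ a, ‖Z a‖ ^ 2 := by
  have hdiag (k : ι) : ∑ β : ι → α, ⟪Z (β k), Z (β k)⟫ =
      Fintype.card α ^ (Fintype.card ι - 1) * ∑ a, ‖Z a‖ ^ 2 := by
    rw [sum_fun_comp_eval k fun a => ⟪Z a, Z a⟫]
    simp [nsmul_eq_mul]
  have hoff {k l : ι} (hlk : l ≠ k) : ∑ β : ι → α, ⟪Z (β k), Z (β l)⟫ = 0 := by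
    rw [sum_fun_comp_eval_eval hlk fun a b => ⟪Z a, Z b⟫]
    simp [← inner_sum, hZ]
  calc ∑ β : ι → α, ‖∑ k, Z (β k)‖ ^ 2
      = ∑ k, ∑ l, ∑ β : ι → α, ⟪Z (β k), Z (β l)⟫ := by
        simp_rw [← real_inner_self_eq_norm_sq, sum_inner, inner_sum]
        rw [sum_comm]
        exact sum_congr rfl fun k _ => sum_comm
    _ = ∑ k : ι, Fintype.card α ^ (Fintype.card ι - 1) * ∑ a, ‖Z a‖ ^ 2 :=
        sum_congr rfl fun k _ => by
          rw [sum_eq_single k (fun l _ hlk => hoff hlk) (by simp), hdiag]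
    _ = _ := by simp [mul_assoc]

theorem sum_norm_sub_mean_sq [Nonempty α] (Y : α → E) :
    ∑ a, ‖Y a - (Fintype.card α : ℝ)⁻¹ • ∑ b, Y b‖ ^ 2 =
      ∑ a, ‖Y a‖ ^ 2 - Fintype.card α * ‖(Fintype.card α : ℝ)⁻¹ • ∑ b, Y b‖ ^ 2 := by
  set N : ℝ := (Fintype.card α : ℝ)
  set c := N⁻¹ • ∑ b, Y b
  have hsum : ∑ b, Y b = N • c := (smul_inv_smul₀ (by positivity) _).symm
  simp_rw [norm_sub_sq_real, sum_add_distrib, sum_sub_distrib, ← mul_sum, ← sum_inner, hsum,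
    real_inner_smul_left, real_inner_self_eq_norm_sq]
  simp [N]
  ring

theorem uniform_batch_mean_error_le [Nonempty α] {B : ℕ} (hB : 0 < B) (Y : α → E) :
    ((Fintype.card α : ℝ) ^ B)⁻¹ * ∑ β : Fin B → α,
        ‖(B : ℝ)⁻¹ • ∑ k, Y (β k) - (Fintype.card α : ℝ)⁻¹ • ∑ a, Y a‖ ≤
      √((B : ℝ)⁻¹ * ((Fintype.card α : ℝ)⁻¹ * ∑ a, ‖Y a‖ ^ 2)) := by
  set N : ℝ := (Fintype.card α : ℝ)
  set c := N⁻¹ • ∑ a, Y a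
  set Z := fun a => Y a - c
  have hZ : ∑ a, Z a = 0 := by
    simp [Z, sum_sub_distrib, c, ← Nat.cast_smul_eq_nsmul ℝ, N]
  have hW (β : Fin B → α) : (B : ℝ)⁻¹ • ∑ k, Y (β k) - c = (B : ℝ)⁻¹ • ∑ k, Z (β k) := by
    simp [Z, sum_sub_distrib, smul_sub, ← Nat.cast_smul_eq_nsmul ℝ, hB.ne']
  have hcard : ((univ : Finset (Fin B → α)).card : ℝ) = N ^ B := by simp [N]
  rw [Real.le_sqrt (by positivity) (by positivity)]
  calc ((N ^ B)⁻¹ * ∑ β : Fin B → α, ‖(B : ℝ)⁻¹ • ∑ k, Y (β k) - c‖) ^ 2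
      ≤ (N ^ B)⁻¹ * ∑ β : Fin B → α, ‖(B : ℝ)⁻¹ • ∑ k, Y (β k) - c‖ ^ 2 := by
        simpa [hcard, div_eq_inv_mul] using
          sum_div_card_sq_le_sum_sq_div_card (s := univ)
            (f := fun β : Fin B → α => ‖(B : ℝ)⁻¹ • ∑ k, Y (β k) - c‖)
    _ = (N ^ B)⁻¹ * ((B : ℝ)⁻¹ ^ 2 * (B * N ^ (B - 1) * ∑ a, ‖Z a‖ ^ 2)) := by
        simp_rw [hW, norm_smul, mul_pow, ← mul_sum, sum_fun_norm_sum_comp_sq_of_sum_eq_zero hZ]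
        simp [N]
    _ = (B : ℝ)⁻¹ * (N⁻¹ * ∑ a, ‖Z a‖ ^ 2) := by
        rw [← pow_sub_one_mul hB.ne' N]
        field_simp
        rw [mul_div_mul_left _ _ (by positivity)]
    _ ≤ (B : ℝ)⁻¹ * (N⁻¹ * ∑ a, ‖Y a‖ ^ 2) := by
        gcongr _ * (_ * ?_)
        rw [sum_norm_sub_mean_sq]
        exact sub_le_self _ (by positivity)

end UniformBatch

theorem stmt9_general {n m N B : ℕ} (hN : 0 < N) (hB : 0 < B)
    (g : Fin N → EuclideanSpace ℝ (Fin n) → EuclideanSpace ℝ (Fin m))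
    (g' : Fin N → EuclideanSpace ℝ (Fin n) →
      (EuclideanSpace ℝ (Fin n) →L[ℝ] EuclideanSpace ℝ (Fin m)))
    (L : Fin N → ℝ) (Lg : ℝ)
    (hg : ∀ j u, HasFDerivAt (g j) (g' j u) u)
    (hLip : ∀ j u v, ‖g' j u - g' j v‖ ≤ L j * ‖u - v‖)
    (hLg : Lg = Real.sqrt ((N : ℝ)⁻¹ * ∑ j, L j ^ 2))
    (x x₀ : EuclideanSpace ℝ (Fin n)) :
    ((N : ℝ) ^ B)⁻¹ * ∑ β : Fin B → Fin N,
      ‖(B : ℝ)⁻¹ • (∑ k, (g (β k) x - g (β k) x₀ - g' (β k) x₀ (x - x₀)))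
        + ((N : ℝ)⁻¹ • ∑ i, g i x₀) + ((N : ℝ)⁻¹ • ∑ i, g' i x₀) (x - x₀)
        - (N : ℝ)⁻¹ • ∑ i, g i x‖
      ≤ Lg / (2 * Real.sqrt B) * ‖x - x₀‖ ^ 2 := by
  have : Nonempty (Fin N) := ⟨⟨0, hN⟩⟩
  set Y : Fin N → EuclideanSpace ℝ (Fin m) := fun i => g i x - g i x₀ - g' i x₀ (x - x₀)
  have hY (i : Fin N) : ‖Y i‖ ≤ L i / 2 * ‖x - x₀‖ ^ 2 :=
    norm_image_sub_sub_fderiv_apply_le (hg i) (hLip i) x₀ x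
  calc _ = ((N : ℝ) ^ B)⁻¹ * ∑ β : Fin B → Fin N,
          ‖(B : ℝ)⁻¹ • ∑ k, Y (β k) - (N : ℝ)⁻¹ • ∑ i, Y i‖ := by
        congr! 3 with β
        simp only [Y, sum_sub_distrib, smul_sub, smul_apply, _root_.sum_apply]
        abel
    _ ≤ √((B : ℝ)⁻¹ * ((N : ℝ)⁻¹ * ∑ i, ‖Y i‖ ^ 2)) := by
        simpa using uniform_batch_mean_error_le hB Y
    _ ≤ √((B : ℝ)⁻¹ * ((N : ℝ)⁻¹ * ∑ i, (L i / 2 * ‖x - x₀‖ ^ 2) ^ 2)) := by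
        gcongr with i
        exact hY i
    _ = √((Lg / (2 * √B) * ‖x - x₀‖ ^ 2) ^ 2) := by
        rw [mul_pow, div_pow, mul_pow, Real.sq_sqrt (Nat.cast_nonneg B), hLg,
          Real.sq_sqrt (by positivity)]
        simp_rw [mul_pow, div_pow, ← sum_mul, ← sum_div]
        field_simp
    _ = Lg / (2 * √B) * ‖x - x₀‖ ^ 2 := Real.sqrt_sq (by rw [hLg]; positivity)

/-- Corrected SVRG estimator error: with a batch `β` of `B` indices drawn i.i.d.
uniformly from `{1,…,N}` (expectation = average over all `β : Fin B → Fin N`),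
the estimator `g̃` satisfies `𝔼‖g̃ - g(x)‖ ≤ (L_g/(2√B))‖x - x₀‖²`. -/
theorem stmt9 {n m N B : ℕ} (hN : 0 < N) (hB : 0 < B)
    (g : Fin N → EuclideanSpace ℝ (Fin n) → EuclideanSpace ℝ (Fin m))
    (g' : Fin N → EuclideanSpace ℝ (Fin n) →
      (EuclideanSpace ℝ (Fin n) →L[ℝ] EuclideanSpace ℝ (Fin m)))
    (L : Fin N → ℝ) (Lg : ℝ) (hL : ∀ j, 0 ≤ L j)
    (hg : ∀ j u, HasFDerivAt (g j) (g' j u) u)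
    (hLip : ∀ j u v, ‖g' j u - g' j v‖ ≤ L j * ‖u - v‖)
    (hLg : Lg = Real.sqrt ((N : ℝ)⁻¹ * ∑ j, L j ^ 2))
    (x x₀ : EuclideanSpace ℝ (Fin n)) :
    ((N : ℝ) ^ B)⁻¹ * ∑ β : Fin B → Fin N,
      ‖(B : ℝ)⁻¹ • (∑ k, (g (β k) x - g (β k) x₀ - g' (β k) x₀ (x - x₀)))
        + ((N : ℝ)⁻¹ • ∑ i, g i x₀) + ((N : ℝ)⁻¹ • ∑ i, g' i x₀) (x - x₀)
        - (N : ℝ)⁻¹ • ∑ i, g i x‖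
      ≤ Lg / (2 * Real.sqrt B) * ‖x - x₀‖ ^ 2 :=
  stmt9_general hN hB g g' L Lg hg hLip hLg x x₀
end

section
/- (Closed form of the truncated stochastic gradient step.) Let $g^*\in\mathbb{R}$, $\tilde g\in\mathbb{R}$ with $\tilde g \ge g^*$, $\tilde J\in\mathbb{R}^n$ with $\tilde J\ne 0$, $M>0$, and $x\in\mathbb{R}^n$. Then the unique minimizer of $y\mapsto \max\{\tilde g + \langle\tilde J, y-x\rangle,\; g^*\} + \frac{M}{2}\|y-x\|^2$ is $y^* = x - \min\Bigl\{\frac{1}{M},\, \frac{\tilde g - g^*}{\|\tilde J\|^2}\Bigr\}\cdot \tilde J$. -/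
/-!
Write `y* = x - t • J̃` with `t = min (1 / M) ((g̃ - g*) / ‖J̃‖²)` and `λ = M t ∈ [0, 1]`.
Bounding the max below by the convex combination `λ (g̃ + ⟪J̃, y - x⟫) + (1 - λ) g*` gives a
quadratic with Hessian `M` and minimizer `y*`, and this bound is tight at `y*` because the choice
of `t` enforces complementary slackness: either `λ = 1` or the affine piece equals `g*` at `y*`.
Hence the objective `f` satisfies `f y* + M/2 ‖y - y*‖² ≤ f y` for all `y`, which gives both minimality and uniqueness.
-/

open RealInnerProductSpace

theorem isUniqueMin_of_quadratic_growth {E : Type*} [NormedAddCommGroup E] {f : E → ℝ}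
    {y₀ : E} {c : ℝ} (hc : 0 < c) (hgrowth : ∀ y, f y₀ + c * ‖y - y₀‖ ^ 2 ≤ f y) :
    (∀ y, f y₀ ≤ f y) ∧ ∀ y, (∀ z, f y ≤ f z) → y = y₀ := by
  refine ⟨fun y => le_of_add_le_of_nonneg_left (hgrowth y) (by positivity), fun y hmin => ?_⟩
  have hsq : c * ‖y - y₀‖ ^ 2 ≤ 0 := by linarith [hgrowth y, hmin y₀]
  have hsq' : ‖y - y₀‖ ^ 2 ≤ 0 := le_of_mul_le_mul_left (by rwa [mul_zero]) hc
  have hnorm : ‖y - y₀‖ = 0 := pow_eq_zero_iff two_ne_zero |>.mp (le_antisymm hsq' (by positivity))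
  exact sub_eq_zero.mp (norm_eq_zero.mp hnorm)

theorem one_sub_mul_min_mul_sub_min_mul_eq_zero {a b c : ℝ} (ha : a ≠ 0) (hc : c ≠ 0) :
    (1 - a * min (1 / a) (b / c)) * (b - min (1 / a) (b / c) * c) = 0 := by
  rcases min_choice (1 / a) (b / c) with h | h <;> rw [h] <;> field_simp <;> ring

section TruncatedModel

variable {E : Type*} [NormedAddCommGroup E] [InnerProductSpace ℝ E]

noncomputable def truncatedModel (g₀ g M : ℝ) (J x y : E) : ℝ :=
  max (g + ⟪J, y - x⟫) g₀ + M / 2 * ‖y - x‖ ^ 2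

theorem truncatedModel_quadratic_growth {g₀ g M t : ℝ} {J x : E} (hM : 0 ≤ M) (ht : 0 ≤ t)
    (hMt : M * t ≤ 1) (hfeas : g₀ ≤ g - t * ‖J‖ ^ 2)
    (hslack : (1 - M * t) * (g - t * ‖J‖ ^ 2 - g₀) = 0) (y : E) :
    truncatedModel g₀ g M J x (x - t • J) + M / 2 * ‖y - (x - t • J)‖ ^ 2
      ≤ truncatedModel g₀ g M J x y := by
  have hstep : x - t • J - x = -(t • J) := by abel
  have hvalue : truncatedModel g₀ g M J x (x - t • J)
      = g - t * ‖J‖ ^ 2 + M / 2 * (t ^ 2 * ‖J‖ ^ 2) := by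
    rw [truncatedModel, hstep, inner_neg_right, real_inner_smul_right, real_inner_self_eq_norm_sq,
      norm_neg, norm_smul, mul_pow, Real.norm_eq_abs, sq_abs, ← sub_eq_add_neg,
      max_eq_left hfeas]
  have hdist : ‖y - (x - t • J)‖ ^ 2 = ‖y - x‖ ^ 2 + 2 * t * ⟪J, y - x⟫ + t ^ 2 * ‖J‖ ^ 2 := by
    rw [show y - (x - t • J) = (y - x) + t • J by abel, norm_add_sq_real, real_inner_smul_right,
      norm_smul, mul_pow, Real.norm_eq_abs, sq_abs, real_inner_comm]
    ring
  have hcombo : M * t * (g + ⟪J, y - x⟫) + (1 - M * t) * g₀ ≤ max (g + ⟪J, y - x⟫) g₀ :=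
    Convex.combo_le_max _ _ (mul_nonneg hM ht) (sub_nonneg.mpr hMt) (add_sub_cancel _ _)
  rw [hvalue, hdist, truncatedModel]
  linear_combination hcombo + hslack

end TruncatedModel

/-- Closed form of the truncated stochastic gradient step. -/
theorem stmt19 {n : ℕ} (gstar tg : ℝ) (htg : gstar ≤ tg)
    (tJ : EuclideanSpace ℝ (Fin n)) (htJ : tJ ≠ 0) (M : ℝ) (hM : 0 < M)
    (x : EuclideanSpace ℝ (Fin n)) :
    let obj : EuclideanSpace ℝ (Fin n) → ℝ :=
      fun y => max (tg + (inner ℝ tJ (y - x) : ℝ)) gstar + M / 2 * ‖y - x‖ ^ 2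
    let ystar : EuclideanSpace ℝ (Fin n) :=
      x - (min (1 / M) ((tg - gstar) / ‖tJ‖ ^ 2)) • tJ
    (∀ y, obj ystar ≤ obj y) ∧ ∀ y, (∀ z, obj y ≤ obj z) → y = ystar := by
  intro obj ystar
  set t := min (1 / M) ((tg - gstar) / ‖tJ‖ ^ 2)
  have hJ : 0 < ‖tJ‖ ^ 2 := by have := norm_pos_iff.mpr htJ; positivity
  have ht0 : 0 ≤ t := le_min (by positivity) (div_nonneg (sub_nonneg.mpr htg) hJ.le)
  have hMt : M * t ≤ 1 := (le_div_iff₀' hM).mp (min_le_left _ _)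
  have hfeas : t * ‖tJ‖ ^ 2 ≤ tg - gstar := (le_div_iff₀ hJ).mp (min_le_right _ _)
  have hslack := one_sub_mul_min_mul_sub_min_mul_eq_zero (b := tg - gstar) hM.ne' hJ.ne'
  refine isUniqueMin_of_quadratic_growth (half_pos hM) fun y => ?_
  exact truncatedModel_quadratic_growth hM.le ht0 hMt (by linarith)
    (by linear_combination hslack) y
end
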